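/- For each n ≥ 1 define the empirical quantile function G_n(x) = U_{(j)}^n for x ∈ I_j^n, j = 1,…,n. Then almost surely sup_{x ∈ [0,1)} |G_n(x) − x| → 0 as n → ∞. -/

import Mathlib

/-!
`U_{(j)} ≤ q` holds exactly when more than `j` of the `n` sample points lie below `q`, so the
empirical quantile function is controlled by the empirical distribution function `F_n`: if
`|F_n(q) − q| < δ` on `[0,1]`, then `|G_n(x) − x| ≤ δ` on `[0,1)`. By the strong law of large
numbers `F_n(q) → q` almost surely for every rational `q`; as the `F_n` are monotone and the limit
is continuous, convergence on a fine finite grid already forces uniform convergence on `[0,1]`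
(the Glivenko–Cantelli argument).
-/

open MeasureTheory ProbabilityTheory

/-- The `j`-th order statistic (`j = 0, …, n−1`, zero-based) of the sample `U 0 ω, …, U (n−1) ω`:
the `j`-th entry of the nondecreasing rearrangement. -/
noncomputable def orderStat {α : Type*} (U : ℕ → α → ℝ) (n : ℕ) (j : Fin n) (ω : α) : ℝ :=
  (((Multiset.range n).map (fun i => U i ω)).sort (· ≤ ·)).get
    ⟨j, by simp⟩

open Finset Filter Topology Set

theorem List.Pairwise.getElem_le_iff_lt_countP {β : Type*} [LinearOrder β] {L : List β}
    (hL : L.Pairwise (· ≤ ·)) (q : β) {j : ℕ} (hj : j < L.length) :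
    L[j] ≤ q ↔ j < L.countP (· ≤ q) := by
  induction L generalizing j with
  | nil => simp at hj
  | cons a t ih =>
    obtain ⟨ha, ht⟩ := List.pairwise_cons.1 hL
    by_cases haq : a ≤ q
    · rw [List.countP_cons_of_pos (by simpa using haq)]
      cases j with
      | zero => simpa using haq
      | succ j => simpa using ih ht (Nat.lt_of_succ_lt_succ hj)
    · have hgt : ∀ x ∈ a :: t, q < x := by
        simp only [List.mem_cons, forall_eq_or_imp]
        exact ⟨not_le.1 haq, fun x hx => (not_le.1 haq).trans_le (ha x hx)⟩
      rw [List.countP_eq_zero.2 fun x hx => by simpa using hgt x hx]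
      simpa using hgt _ (List.getElem_mem hj)

theorem tendstoUniformlyOn_id_of_monotone {ι : Type*} {l : Filter ι} {F : ι → ℝ → ℝ}
    (hmono : ∀ i, Monotone (F i))
    (hlim : ∀ q : ℚ, (q : ℝ) ∈ Icc (0 : ℝ) 1 → Tendsto (fun i => F i q) l (𝓝 (q : ℝ))) :
    TendstoUniformlyOn F id l (Icc 0 1) := by
  rw [Metric.tendstoUniformlyOn_iff]
  intro δ hδ
  obtain ⟨m, hm⟩ := exists_nat_one_div_lt (half_pos hδ)
  set M : ℕ := m + 1
  have hM : (0 : ℝ) < M := by positivity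
  have hMδ : 1 / (M : ℝ) < δ / 2 := by simpa [M] using hm
  have hgrid : ∀ᶠ i in l, ∀ k ∈ range (M + 1), |F i (k / M) - k / M| < δ / 2 := by
    rw [eventually_all_finset]
    intro k hk
    have hkM : (k : ℝ) ≤ M := by exact_mod_cast Finset.mem_range_succ_iff.1 hk
    have hq : ((k / M : ℚ) : ℝ) ∈ Icc (0 : ℝ) 1 := by
      push_cast
      exact ⟨by positivity, (div_le_one hM).2 hkM⟩
    simpa [Real.dist_eq] using Metric.tendsto_nhds.1 (hlim _ hq) _ (half_pos hδ)
  filter_upwards [hgrid] with i hi q hq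
  have hqM : q * M ≤ M := mul_le_of_le_one_left hM.le hq.2
  have hqM0 : 0 ≤ q * M := mul_nonneg hq.1 hM.le
  set lo := ⌊q * M⌋₊
  set up := ⌈q * M⌉₊
  have hlo : (lo : ℝ) / M ≤ q ∧ q < lo / M + 1 / M := by
    rw [div_le_iff₀ hM, ← add_div, lt_div_iff₀ hM]
    exact ⟨Nat.floor_le hqM0, Nat.lt_floor_add_one _⟩
  have hup : q ≤ (up : ℝ) / M ∧ (up : ℝ) / M < q + 1 / M := by
    rw [le_div_iff₀ hM, div_lt_iff₀ hM, add_mul, one_div_mul_cancel hM.ne']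
    exact ⟨Nat.le_ceil _, Nat.ceil_lt_add_one hqM0⟩
  have hlo_mem : lo ∈ range (M + 1) :=
    Finset.mem_range_succ_iff.2 (Nat.floor_le_of_le (by exact_mod_cast hqM))
  have hup_mem : up ∈ range (M + 1) := Finset.mem_range_succ_iff.2 (Nat.ceil_le.2 hqM)
  have hFlo := (abs_lt.1 (hi lo hlo_mem)).1
  have hFup := (abs_lt.1 (hi up hup_mem)).2
  have h1 := hmono i hlo.1
  have h2 := hmono i hup.1
  rw [dist_comm, Real.dist_eq, id, abs_lt]
  constructor <;> linarith

section OrderStatistics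

variable {α : Type*} (U : ℕ → α → ℝ) (n : ℕ) (ω : α)

theorem orderStat_le_iff (j : Fin n) (q : ℝ) :
    orderStat U n j ω ≤ q ↔ (j : ℕ) < #{i ∈ range n | U i ω ≤ q} := by
  rw [orderStat, List.get_eq_getElem,
    (Multiset.pairwise_sort _ _).getElem_le_iff_lt_countP q, ← Multiset.coe_countP,
    Multiset.sort_eq, Multiset.countP_map]
  rfl

theorem exists_eq_orderStat (j : Fin n) : ∃ i < n, U i ω = orderStat U n j ω := by
  have h := List.get_mem (((Multiset.range n).map (fun i => U i ω)).sort (· ≤ ·)) ⟨j, by simp⟩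
  rw [Multiset.mem_sort, Multiset.mem_map] at h
  simpa [orderStat] using h

noncomputable def empiricalCDF (q : ℝ) : ℝ := #{i ∈ range n | U i ω ≤ q} / n

theorem empiricalCDF_mono : Monotone (empiricalCDF U n ω) := fun _ _ hpq =>
  div_le_div_of_nonneg_right
    (Nat.cast_le.2 (card_le_card fun _ => by
      simp only [mem_filter]
      exact And.imp_right (·.trans hpq)))
    n.cast_nonneg

theorem orderStat_le_of_lt_empiricalCDF {j : Fin n} {q : ℝ}
    (h : (j : ℝ) / n < empiricalCDF U n ω q) : orderStat U n j ω ≤ q := by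
  have hn : (0 : ℝ) < n := by exact_mod_cast j.pos
  rw [orderStat_le_iff, ← Nat.cast_lt (α := ℝ)]
  exact (div_lt_div_iff_of_pos_right hn).1 h

theorem lt_orderStat_of_empiricalCDF_lt {j : Fin n} {q : ℝ}
    (h : empiricalCDF U n ω q < ((j : ℝ) + 1) / n) : q < orderStat U n j ω := by
  have hn : (0 : ℝ) < n := by exact_mod_cast j.pos
  rw [← not_le, orderStat_le_iff, not_lt, ← Nat.lt_succ_iff, ← Nat.cast_lt (α := ℝ)]
  push_cast
  exact (div_lt_div_iff_of_pos_right hn).1 h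

theorem abs_orderStat_sub_le {δ : ℝ} (hU : ∀ i, U i ω ∈ Icc (0 : ℝ) 1)
    (hF : ∀ q ∈ Icc (0 : ℝ) 1, |empiricalCDF U n ω q - q| < δ) (j : Fin n)
    {x : ℝ} (hx : x ∈ Ico ((j : ℝ) / n) (((j : ℕ) + 1 : ℝ) / n)) :
    |orderStat U n j ω - x| ≤ δ := by
  obtain ⟨i, -, hi⟩ := exists_eq_orderStat U n ω j
  have hG : orderStat U n j ω ∈ Icc (0 : ℝ) 1 := hi ▸ hU i
  have hj : ((j : ℕ) + 1 : ℝ) / n ≤ 1 := by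
    rw [div_le_one (by exact_mod_cast j.pos)]
    exact_mod_cast j.isLt
  have hδ : 0 ≤ δ := (abs_nonneg _).trans (hF 0 ⟨le_rfl, zero_le_one⟩).le
  have upper : orderStat U n j ω ≤ (j : ℝ) / n + δ := by
    by_cases hq : (j : ℝ) / n + δ ≤ 1
    · refine orderStat_le_of_lt_empiricalCDF U n ω ?_
      linarith [(abs_lt.1 (hF _ ⟨by positivity, hq⟩)).1]
    · linarith [hG.2]
  have lower : ((j : ℕ) + 1 : ℝ) / n - δ < orderStat U n j ω := by
    by_cases hq : 0 ≤ ((j : ℕ) + 1 : ℝ) / n - δ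
    · refine lt_orderStat_of_empiricalCDF_lt U n ω ?_
      linarith [(abs_lt.1 (hF _ ⟨hq, by linarith⟩)).2]
    · linarith [hG.1]
  rw [abs_le]
  constructor <;> linarith [hx.1, hx.2]

end OrderStatistics

theorem ae_tendsto_empiricalCDF {Ω : Type*} [MeasurableSpace Ω] {μ : Measure Ω}
    [IsFiniteMeasure μ]
    {U : ℕ → Ω → ℝ} (hindep : Pairwise fun i j => U i ⟂ᵢ[μ] U j)
    (hident : ∀ i, IdentDistrib (U i) (U 0) μ μ) (q : ℝ) :
    ∀ᵐ ω ∂μ, Tendsto (fun n => empiricalCDF U n ω q) atTop (𝓝 ((μ.map (U 0)).real (Iic q))) := by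
  set φ : ℝ → ℝ := (Iic q).indicator 1
  have hφ : Measurable φ := measurable_const.indicator measurableSet_Iic
  have hU0 : AEMeasurable (U 0) μ := (hident 0).aemeasurable_fst
  have hint : Integrable (φ ∘ U 0) μ :=
    .of_bound (hφ.comp_aemeasurable hU0).aestronglyMeasurable 1
      (.of_forall fun ω => norm_indicator_le_norm_self _ _ |>.trans (by simp))
  have hmean : μ[φ ∘ U 0] = (μ.map (U 0)).real (Iic q) := by
    rw [← integral_indicator_one measurableSet_Iic, integral_map hU0 hφ.aestronglyMeasurable]
    rfl
  have hslln := strong_law_ae_real (fun i => φ ∘ U i) hint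
    (fun i j hij => (hindep hij).comp hφ hφ) (fun i => (hident i).comp hφ)
  filter_upwards [hslln] with ω hω
  rw [← hmean]
  convert hω using 2 with n
  simp only [empiricalCDF, Function.comp_apply, φ, Set.indicator_apply, Set.mem_Iic,
    Pi.one_apply, sum_boole]

/-- Let `(U_i)` be i.i.d. uniform on `[0,1]`. For each `n` define the
empirical quantile function `G_n(x) = U_{(j)}^n` for `x ∈ I_j^n = [(j−1)/n, j/n)`. Then
almost surely `sup_{x ∈ [0,1)} |G_n(x) − x| → 0` as `n → ∞` (stated as uniform convergence:
for every `ε > 0` there is `N` such that for all `n ≥ N`, all `j` and all `x ∈ I_j^n`,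
`|U_{(j)}^n − x| < ε`). -/
theorem stmt_18 {α : Type*} [MeasureSpace α] [IsProbabilityMeasure (ℙ : Measure α)]
    (U : ℕ → α → ℝ) (h_meas : ∀ i, Measurable (U i))
    (h_indep : iIndepFun U ℙ)
    (h_unif : ∀ i, Measure.map (U i) ℙ = volume.restrict (Set.Icc (0:ℝ) 1)) :
    ∀ᵐ ω ∂(ℙ : Measure α), ∀ ε > (0:ℝ), ∃ N : ℕ, ∀ n ≥ N, ∀ j : Fin n,
      ∀ x ∈ Set.Ico ((j : ℝ) / n) (((j : ℕ) + 1 : ℝ) / n),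
        |orderStat U n j ω - x| < ε := by
  have hU : ∀ᵐ ω, ∀ i, U i ω ∈ Icc (0 : ℝ) 1 := ae_all_iff.2 fun i =>
    ae_of_ae_map (h_meas i).aemeasurable (h_unif i ▸ ae_restrict_mem measurableSet_Icc)
  have hcdf : ∀ q ∈ Icc (0 : ℝ) 1, ((ℙ : Measure α).map (U 0)).real (Iic q) = q := fun q hq => by
    have hIcc : Iic q ∩ Icc 0 1 = Icc 0 q := by
      ext x
      simp only [mem_inter_iff, Set.mem_Iic, Set.mem_Icc]
      grind
    rw [h_unif 0, measureReal_restrict_apply measurableSet_Iic, hIcc,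
      Real.volume_real_Icc_of_le hq.1, sub_zero]
  have hident : ∀ i, IdentDistrib (U i) (U 0) ℙ ℙ := fun i =>
    ⟨(h_meas i).aemeasurable, (h_meas 0).aemeasurable, by rw [h_unif i, h_unif 0]⟩
  have hF : ∀ᵐ ω, TendstoUniformlyOn (fun n => empiricalCDF U n ω) id atTop (Icc 0 1) := by
    filter_upwards [ae_all_iff.2 fun q : ℚ =>
      ae_tendsto_empiricalCDF (fun i j hij => h_indep.indepFun hij) hident q] with ω hω
    exact tendstoUniformlyOn_id_of_monotone (empiricalCDF_mono U · ω)
      fun q hq => by simpa only [hcdf q hq] using hω q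
  filter_upwards [hU, hF] with ω hUω hFω ε hε
  obtain ⟨N, hN⟩ := eventually_atTop.1 (Metric.tendstoUniformlyOn_iff.1 hFω _ (half_pos hε))
  refine ⟨N, fun n hn j x hx => (abs_orderStat_sub_le U n ω hUω (fun q hq => ?_) j hx).trans_lt
    (half_lt_self hε)⟩
  simpa [Real.dist_eq, abs_sub_comm] using hN n hn q hq
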